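/- arXiv:2305.17946 — 7 statements merged into one kernel-verified Lean document; each statement's English description precedes it below -/
import Mathlib

section
/- If groups G and H each admit a pointy action, then the direct product G × H admits a pointy action. -/
/-! Common definitions: the full shift, its automorphism group, and wreath products. -/

/-- The full shift space `Σ^ℤ` (functions `ℤ → α`), carrying the product topology
where the alphabet `α` is given the discrete topology. -/
def FullShift (α : Type*) : Type _ := ℤ → α

instance (α : Type*) : TopologicalSpace (FullShift α) :=
  letI : TopologicalSpace α := ⊥
  (inferInstance : TopologicalSpace (ℤ → α))

/-- The shift homeomorphism `σ(x)(i) = x(i+1)`. -/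
def shiftHomeo (α : Type*) : FullShift α ≃ₜ FullShift α where
  toFun x := fun i => x (i + 1)
  invFun x := fun i => x (i - 1)
  left_inv x := by funext i; show x (i - 1 + 1) = x i; ring_nf
  right_inv x := by funext i; show x (i + 1 - 1) = x i; ring_nf
  continuous_toFun := by
    letI : TopologicalSpace α := ⊥
    exact continuous_pi fun i => continuous_apply (i + 1)
  continuous_invFun := by
    letI : TopologicalSpace α := ⊥
    exact continuous_pi fun i => continuous_apply (i - 1)

/-- The group of self-homeomorphisms of the full shift, under composition. -/
instance fullShiftHomeoGroup (α : Type*) : Group (FullShift α ≃ₜ FullShift α) where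
  mul f g := g.trans f
  one := Homeomorph.refl _
  inv := Homeomorph.symm
  mul_assoc f g h := Homeomorph.ext fun _ => rfl
  one_mul f := Homeomorph.ext fun _ => rfl
  mul_one f := Homeomorph.ext fun _ => rfl
  inv_mul_cancel f := Homeomorph.ext fun x => f.symm_apply_apply x

/-- The automorphism group `Aut(Σ^ℤ)` of the full shift: the centralizer of the
shift map in the group of self-homeomorphisms. -/
def ShiftAut (α : Type*) : Subgroup (FullShift α ≃ₜ FullShift α) :=
  Subgroup.centralizer {shiftHomeo α}

/-- Self-homeomorphisms of the full shift act on the full shift by application. -/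
instance fullShiftHomeoMulAction (α : Type*) :
    MulAction (FullShift α ≃ₜ FullShift α) (FullShift α) where
  smul f x := f x
  one_smul _ := rfl
  mul_smul _ _ _ := rfl

/-- The constant configuration with value `z`. -/
def constConfig (α : Type*) (z : α) : FullShift α := fun _ => z

/-- `Aut₀(Σ^ℤ)`: the subgroup of `Aut(Σ^ℤ)` consisting of the shift-commuting
self-homeomorphisms which fix the constant-`z` configuration. -/
def ShiftAut₀ (α : Type*) (z : α) : Subgroup (FullShift α ≃ₜ FullShift α) :=
  ShiftAut α ⊓ MulAction.stabilizer (FullShift α ≃ₜ FullShift α) (constConfig α z)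

/-- A group `G` admits a *pointy action* if there is a finite alphabet `E` with a
distinguished element `z` and an injective homomorphism `φ : G →* Aut(E^ℤ)` such that every
`φ g` fixes the constant-`z` configuration, and some `z`-finite configuration `x₀` has free
orbit, i.e. `g ↦ φ(g)(x₀)` is injective. -/
def HasPointyAction (G : Type*) [Group G] : Prop :=
  ∃ (E : Type) (_ : Fintype E) (z : E) (φ : G →* ShiftAut E),
    Function.Injective φ ∧
    (∀ g : G, (φ g : FullShift E ≃ₜ FullShift E) • constConfig E z = constConfig E z) ∧
    ∃ x₀ : FullShift E, {i : ℤ | x₀ i ≠ z}.Finite ∧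
      Function.Injective fun g : G => (φ g : FullShift E ≃ₜ FullShift E) • x₀

/-! Run the two actions side by side on the product alphabet `E × F`: `(g, h)` acts by `g` on
the `E`-row and by `h` on the `F`-row of a configuration. Such row-wise maps commute with the shift
and fix the constant `(z, w)` configuration, and pairing the two free `z`- and `w`-finite points
gives a `(z, w)`-finite point whose orbit is free. -/

namespace FullShift

def prodHomeomorph (E F : Type*) : FullShift (E × F) ≃ₜ FullShift E × FullShift F where
  toFun x := (fun i => (x i).1, fun i => (x i).2)
  invFun p := fun i => (p.1 i, p.2 i)
  left_inv _ := rfl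
  right_inv _ := rfl
  continuous_toFun := by
    let _ : TopologicalSpace E := ⊥
    let _ : TopologicalSpace F := ⊥
    let _ : TopologicalSpace (E × F) := ⊥
    exact (continuous_pi fun i => continuous_bot.comp (continuous_apply i)).prodMk
      (continuous_pi fun i => continuous_bot.comp (continuous_apply i))
  continuous_invFun := by
    let _ : TopologicalSpace E := ⊥
    let _ : TopologicalSpace F := ⊥
    have : DiscreteTopology E := ⟨rfl⟩
    have : DiscreteTopology F := ⟨rfl⟩
    refine @continuous_pi _ _ _ _ (fun _ => ⊥) _ fun i => ?_
    rw [← (DiscreteTopology.eq_bot : instTopologicalSpaceProd = (⊥ : TopologicalSpace (E × F)))]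
    fun_prop

variable {E F : Type*}

def pair (a : FullShift E) (b : FullShift F) : FullShift (E × F) :=
  (prodHomeomorph E F).symm (a, b)

theorem pair_injective : Function.Injective fun p : FullShift E × FullShift F => pair p.1 p.2 :=
  (prodHomeomorph E F).symm.injective

theorem pair_constConfig (z : E) (w : F) :
    pair (constConfig E z) (constConfig F w) = constConfig (E × F) (z, w) :=
  rfl

theorem setOf_pair_ne_subset (a : FullShift E) (b : FullShift F) (z : E) (w : F) :
    {i | pair a b i ≠ (z, w)} ⊆ {i | a i ≠ z} ∪ {i | b i ≠ w} := by
  intro i hi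
  by_contra h
  simp only [Set.mem_union, Set.mem_ofPred_eq, not_or, not_not] at h
  exact hi (Prod.ext h.1 h.2)

def prodMap :
    (FullShift E ≃ₜ FullShift E) × (FullShift F ≃ₜ FullShift F) →*
      (FullShift (E × F) ≃ₜ FullShift (E × F)) where
  toFun fg := (prodHomeomorph E F).trans ((fg.1.prodCongr fg.2).trans (prodHomeomorph E F).symm)
  map_one' := rfl
  map_mul' _ _ := rfl

theorem prodMap_pair (f : FullShift E ≃ₜ FullShift E) (g : FullShift F ≃ₜ FullShift F)
    (a : FullShift E) (b : FullShift F) : prodMap (f, g) (pair a b) = pair (f a) (g b) :=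
  rfl

theorem prodMap_shiftHomeo : prodMap (shiftHomeo E, shiftHomeo F) = shiftHomeo (E × F) :=
  rfl

theorem prodMap_mem_shiftAut {f : FullShift E ≃ₜ FullShift E} {g : FullShift F ≃ₜ FullShift F}
    (hf : f ∈ ShiftAut E) (hg : g ∈ ShiftAut F) : prodMap (f, g) ∈ ShiftAut (E × F) := by
  rw [ShiftAut, Subgroup.mem_centralizer_singleton_iff] at *
  rw [← prodMap_shiftHomeo, ← map_mul, ← map_mul, Prod.mk_mul_mk, Prod.mk_mul_mk, hf, hg]

def shiftAutProd (E F : Type*) : ShiftAut E × ShiftAut F →* ShiftAut (E × F) :=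
  (prodMap.comp ((ShiftAut E).subtype.prodMap (ShiftAut F).subtype)).codRestrict _
    fun fg => prodMap_mem_shiftAut fg.1.2 fg.2.2

theorem shiftAutProd_smul_pair (f : ShiftAut E) (g : ShiftAut F) (a : FullShift E)
    (b : FullShift F) :
    (shiftAutProd E F (f, g) : FullShift (E × F) ≃ₜ FullShift (E × F)) • pair a b =
      pair ((f : FullShift E ≃ₜ FullShift E) • a) ((g : FullShift F ≃ₜ FullShift F) • b) :=
  prodMap_pair _ _ a b

end FullShift

/-- Pointy actions are closed under direct products. -/
theorem hasPointyAction_prod (G H : Type*) [Group G] [Group H]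
    (hG : HasPointyAction G) (hH : HasPointyAction H) : HasPointyAction (G × H) := by
  obtain ⟨E, _, z, φ, -, hφz, x, hx_fin, hx_orbit⟩ := hG
  obtain ⟨F, _, w, ψ, -, hψw, y, hy_fin, hy_orbit⟩ := hH
  let χ := (FullShift.shiftAutProd E F).comp (φ.prodMap ψ)
  have hχ_smul : (fun gh : G × H => (χ gh : FullShift (E × F) ≃ₜ FullShift (E × F)) • x.pair y) =
      fun gh => ((φ gh.1 : FullShift E ≃ₜ FullShift E) • x).pair
        ((ψ gh.2 : FullShift F ≃ₜ FullShift F) • y) :=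
    funext fun gh => FullShift.shiftAutProd_smul_pair (φ gh.1) (ψ gh.2) x y
  have hχ_orbit : Function.Injective fun gh : G × H =>
      (χ gh : FullShift (E × F) ≃ₜ FullShift (E × F)) • x.pair y := by
    rw [hχ_smul]
    exact FullShift.pair_injective.comp (hx_orbit.prodMap hy_orbit)
  refine ⟨E × F, inferInstance, (z, w), χ, ?_, fun gh => ?_, x.pair y, ?_, hχ_orbit⟩
  · exact Function.Injective.of_comp (f := fun k : ShiftAut (E × F) =>
      (k : FullShift (E × F) ≃ₜ FullShift (E × F)) • x.pair y) hχ_orbit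
  · rw [← FullShift.pair_constConfig]
    exact (FullShift.shiftAutProd_smul_pair (φ gh.1) (ψ gh.2) _ _).trans
      (congrArg₂ FullShift.pair (hφz gh.1) (hψw gh.2))
  · exact (hx_fin.union hy_fin).subset (FullShift.setOf_pair_ne_subset x y z w)
end

section
/- Let G be a subgroup of finite index in a group H. If G admits a pointy action, then H admits a pointy action. -/
/-! Fix coset representatives `c.out` of `G` in `H`; they define a cocycle
`(h, c) ↦ c.out⁻¹ * h * (h⁻¹ • c).out ∈ G`. Over the alphabet `H ⧸ G → E × H ⧸ G` (one `E`-track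
and one coset-track per coset), `h` acts by moving the tracks along `c ↦ h • c`, applying `φ` of
the cocycle to the `E`-tracks. This is the induced action: it commutes with the shift and fixes the
constant configuration. Put `x₀` on every `E`-track and, at position `0` only, write each coset
on its own coset-track. If `h` fixes this configuration, the coset-tracks force `h • G = G`, and
then the cocycle at `G` is a conjugate of `h` fixing `x₀`, so `h = 1`. -/

open Function

namespace FullShift

variable {α β : Type*}

theorem continuous_iff {X : Type*} [TopologicalSpace X] {f : X → FullShift α} :
    Continuous f ↔ ∀ i, IsLocallyConstant fun x => f x i := by
  let _ : TopologicalSpace α := ⊥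
  have : DiscreteTopology α := ⟨rfl⟩
  exact continuous_pi_iff.trans (forall_congr' fun i => (IsLocallyConstant.iff_continuous _).symm)

theorem isLocallyConstant_apply (i : ℤ) : IsLocallyConstant fun x : FullShift α => x i :=
  continuous_iff.mp continuous_id i

def map (f : α → β) (x : FullShift α) : FullShift β := fun i => f (x i)

theorem continuous_map (f : α → β) : Continuous (map f) :=
  continuous_iff.mpr fun i => (isLocallyConstant_apply i).comp f

def congrHomeo (e : α ≃ β) : FullShift α ≃ₜ FullShift β where
  toFun := map e
  invFun := map e.symm
  left_inv x := funext fun i => e.symm_apply_apply (x i)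
  right_inv y := funext fun i => e.apply_symm_apply (y i)
  continuous_toFun := continuous_map e
  continuous_invFun := continuous_map e.symm

@[simp]
theorem congrHomeo_apply (e : α ≃ β) (x : FullShift α) (i : ℤ) :
    congrHomeo e x i = e (x i) := rfl

theorem congrHomeo_constConfig (e : α ≃ β) (a : α) :
    congrHomeo e (constConfig α a) = constConfig β (e a) := rfl

end FullShift

open FullShift

namespace ShiftAut

variable {α β : Type*}

theorem mem_iff {f : FullShift α ≃ₜ FullShift α} :
    f ∈ ShiftAut α ↔ ∀ x, f (shiftHomeo α x) = shiftHomeo α (f x) := by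
  rw [ShiftAut, Subgroup.mem_centralizer_singleton_iff, Homeomorph.ext_iff]
  rfl

theorem smul_shiftHomeo (g : ShiftAut α) (x : FullShift α) :
    g • shiftHomeo α x = shiftHomeo α (g • x) :=
  mem_iff.mp g.2 x

def congr (e : α ≃ β) : ShiftAut α →* ShiftAut β where
  toFun g := ⟨(congrHomeo e).symm.trans ((g : FullShift α ≃ₜ FullShift α).trans (congrHomeo e)),
    mem_iff.mpr fun x => congrArg (congrHomeo e) (smul_shiftHomeo g ((congrHomeo e).symm x))⟩
  map_one' := Subtype.ext <| Homeomorph.ext (congrHomeo e).apply_symm_apply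
  map_mul' g h := Subtype.ext <| Homeomorph.ext fun x => by simp

theorem congr_smul_congrHomeo (e : α ≃ β) (g : ShiftAut α) (x : FullShift α) :
    congr e g • congrHomeo e x = congrHomeo e (g • x) :=
  congrArg (congrHomeo e ∘ (g • ·)) ((congrHomeo e).symm_apply_apply x)

end ShiftAut

theorem MonoidHom.injective_smul_iff {H K X : Type*} [Group H] [Group K] [MulAction K X]
    (ψ : H →* K) (x : X) : Injective (fun g => ψ g • x) ↔ ∀ g, ψ g • x = x → g = 1 := by
  refine ⟨fun hinj g hg => hinj (by simpa using hg), fun hfix a b (hab : ψ a • x = ψ b • x) => ?_⟩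
  have : ψ (b⁻¹ * a) • x = x := by
    rw [map_mul, mul_smul, hab, map_inv, inv_smul_smul]
  exact (inv_mul_eq_one.mp (hfix _ this)).symm

-- `HasPointyAction` asks for an alphabet in `Type`, while the induced one lives in `H`'s universe.
theorem HasPointyAction.of_finite {G A : Type*} [Group G] [Finite A] (z : A)
    (φ : G →* ShiftAut A) (hz : ∀ g, φ g • constConfig A z = constConfig A z)
    (x₀ : FullShift A) (hx₀ : {i | x₀ i ≠ z}.Finite) (hfree : Injective fun g => φ g • x₀) :
    HasPointyAction G := by
  obtain ⟨n, ⟨e⟩⟩ := Finite.exists_equiv_fin A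
  have hfree' : Injective fun g => (ShiftAut.congr e).comp φ g • congrHomeo e x₀ :=
    fun a b hab => hfree <| (congrHomeo e).injective <| by
      simpa only [MonoidHom.comp_apply, ShiftAut.congr_smul_congrHomeo] using hab
  refine ⟨Fin n, inferInstance, e z, (ShiftAut.congr e).comp φ,
    .of_comp (f := (· • congrHomeo e x₀)) hfree', fun g => ?_, congrHomeo e x₀,
    by simpa using hx₀, hfree'⟩
  rw [← congrHomeo_constConfig]
  exact (ShiftAut.congr_smul_congrHomeo e _ _).trans (congrArg (congrHomeo e) (hz g))

namespace Subgroup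

variable {H : Type*} [Group H] (G : Subgroup H)

noncomputable def cosetCocycle (h : H) (c : H ⧸ G) : G :=
  ⟨c.out⁻¹ * h * (h⁻¹ • c).out, by
    rw [mul_assoc, ← QuotientGroup.eq, ← smul_eq_mul, ← MulAction.Quotient.smul_mk,
      QuotientGroup.out_eq', QuotientGroup.out_eq', smul_inv_smul]⟩

variable {G}

theorem coe_cosetCocycle (h : H) (c : H ⧸ G) :
    (G.cosetCocycle h c : H) = c.out⁻¹ * h * (h⁻¹ • c).out := rfl

@[simp]
theorem cosetCocycle_one (c : H ⧸ G) : G.cosetCocycle 1 c = 1 :=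
  Subtype.ext <| by simp [coe_cosetCocycle]

theorem cosetCocycle_mul (h₁ h₂ : H) (c : H ⧸ G) :
    G.cosetCocycle (h₁ * h₂) c = G.cosetCocycle h₁ c * G.cosetCocycle h₂ (h₁⁻¹ • c) := by
  apply Subtype.ext
  simp only [coe_cosetCocycle, Subgroup.coe_mul, mul_inv_rev, mul_smul]
  group

end Subgroup

namespace ShiftAut

variable {H : Type*} [Group H] {G : Subgroup H} {E : Type*} (φ : G →* ShiftAut E)

noncomputable def inducedMap (h : H) (x : FullShift (H ⧸ G → E × H ⧸ G)) :
    FullShift (H ⧸ G → E × H ⧸ G) := fun i c =>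
  ((φ (G.cosetCocycle h c) • map (fun a => (a (h⁻¹ • c)).1) x) i, (x i (h⁻¹ • c)).2)

theorem inducedMap_one (x : FullShift (H ⧸ G → E × H ⧸ G)) : inducedMap φ 1 x = x := by
  funext i c
  simp [inducedMap, map]

theorem inducedMap_mul (h₁ h₂ : H) (x : FullShift (H ⧸ G → E × H ⧸ G)) :
    inducedMap φ (h₁ * h₂) x = inducedMap φ h₁ (inducedMap φ h₂ x) := by
  funext i c
  simp only [inducedMap, Subgroup.cosetCocycle_mul, map_mul, mul_inv_rev, mul_smul]
  rfl

theorem inducedMap_shiftHomeo (h : H) (x : FullShift (H ⧸ G → E × H ⧸ G)) :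
    inducedMap φ h (shiftHomeo _ x) = shiftHomeo _ (inducedMap φ h x) := by
  funext i c
  exact congrArg (·, _) (congrFun (smul_shiftHomeo (φ (G.cosetCocycle h c))
    (map (fun a : H ⧸ G → E × H ⧸ G => (a (h⁻¹ • c)).1) x)) i)

variable (G) in
def markedConfig (x : FullShift E) : FullShift (H ⧸ G → E × H ⧸ G) :=
  fun i c => (x i, if i = 0 then c else (1 : H))

theorem finite_setOf_markedConfig_ne {x : FullShift E} {z : E} (hx : {i | x i ≠ z}.Finite) :
    {i | markedConfig G x i ≠ fun _ => (z, ((1 : H) : H ⧸ G))}.Finite := by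
  refine (hx.union (Set.finite_singleton 0)).subset fun i hi => ?_
  by_cases h0 : i = 0
  · exact Or.inr h0
  · refine Or.inl fun hxi => hi (funext fun c => ?_)
    simp [markedConfig, hxi, h0]

theorem eq_one_of_inducedMap_markedConfig {x : FullShift E} (hx : ∀ g, φ g • x = x → g = 1)
    {h : H} (hh : inducedMap φ h (markedConfig G x) = markedConfig G x) : h = 1 := by
  have hcoset : h⁻¹ • ((1 : H) : H ⧸ G) = (1 : H) := by
    simpa [inducedMap, markedConfig] using congrArg Prod.snd (congrFun (congrFun hh 0) (1 : H))
  have hcocycle : G.cosetCocycle h (1 : H) = 1 :=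
    hx _ (funext fun i => congrArg Prod.fst (congrFun (congrFun hh i) (1 : H)))
  have := congrArg Subtype.val hcocycle
  rw [Subgroup.coe_cosetCocycle, hcoset] at this
  simpa [mul_eq_one_iff_eq_inv] using this

variable [Finite (H ⧸ G)]

theorem continuous_inducedMap (h : H) : Continuous (inducedMap φ h) := by
  refine continuous_iff.mpr fun i => (LocallyConstant.unflip fun c => ⟨_, ?_⟩).isLocallyConstant
  exact ((isLocallyConstant_apply i).comp_continuous
      ((φ (G.cosetCocycle h c)).1.continuous.comp (continuous_map _))).prodMk
    ((isLocallyConstant_apply i).comp fun a : H ⧸ G → E × H ⧸ G => (a (h⁻¹ • c)).2)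

noncomputable def inducedHomeo (h : H) :
    FullShift (H ⧸ G → E × H ⧸ G) ≃ₜ FullShift (H ⧸ G → E × H ⧸ G) where
  toFun := inducedMap φ h
  invFun := inducedMap φ h⁻¹
  left_inv x := by rw [← inducedMap_mul, inv_mul_cancel, inducedMap_one]
  right_inv x := by rw [← inducedMap_mul, mul_inv_cancel, inducedMap_one]
  continuous_toFun := continuous_inducedMap φ h
  continuous_invFun := continuous_inducedMap φ h⁻¹

noncomputable def induced : H →* ShiftAut (H ⧸ G → E × H ⧸ G) where
  toFun h := ⟨inducedHomeo φ h, mem_iff.mpr (inducedMap_shiftHomeo φ h)⟩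
  map_one' := Subtype.ext <| Homeomorph.ext (inducedMap_one φ)
  map_mul' h₁ h₂ := Subtype.ext <| Homeomorph.ext (inducedMap_mul φ h₁ h₂)

theorem induced_smul_constConfig {z : E} (hz : ∀ g, φ g • constConfig E z = constConfig E z)
    (h : H) :
    induced φ h • constConfig (H ⧸ G → E × H ⧸ G) (fun _ => (z, (1 : H))) =
      constConfig (H ⧸ G → E × H ⧸ G) (fun _ => (z, (1 : H))) :=
  funext fun i => funext fun _ => congrArg (·, _) (congrFun (hz _) i)

theorem injective_induced_smul_markedConfig {x : FullShift E}
    (hx : Injective fun g => φ g • x) :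
    Injective fun h => induced φ h • markedConfig G x :=
  (MonoidHom.injective_smul_iff (induced φ) _).mpr fun _ =>
    eq_one_of_inducedMap_markedConfig φ ((MonoidHom.injective_smul_iff φ x).mp hx)

end ShiftAut

/-- If `G` is a finite-index subgroup of `H` and `G` admits a pointy
action, then so does `H`. -/
theorem hasPointyAction_of_finiteIndex (H : Type*) [Group H] (G : Subgroup H)
    [G.FiniteIndex] (hG : HasPointyAction G) : HasPointyAction H := by
  obtain ⟨E, _, z, φ, -, hz, x₀, hx₀, hfree⟩ := hG
  exact HasPointyAction.of_finite _ (ShiftAut.induced φ)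
    (ShiftAut.induced_smul_constConfig φ hz)
    (ShiftAut.markedConfig G x₀) (ShiftAut.finite_setOf_markedConfig_ne hx₀)
    (ShiftAut.injective_induced_smul_markedConfig φ hfree)
end

section
/- Let A be a finite abelian group. Then the wreath product A ≀ ℤ admits a pointy action. -/
/-- The multiplicative group structure on `AddAut M` of the older Mathlib
(`e₁ * e₂ = e₂.trans e₁`); current Mathlib makes `AddAut M` an additive group instead. -/
instance addAutMulGroupOld (M : Type*) [Add M] : Group (AddAut M) where
  mul g h := AddEquiv.trans h g
  one := AddEquiv.refl _
  inv := AddEquiv.symm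
  mul_assoc _ _ _ := rfl
  one_mul _ := rfl
  mul_one _ := rfl
  inv_mul_cancel := AddEquiv.self_trans_symm

/-- Additive automorphisms of `M` as multiplicative automorphisms of `Multiplicative M`. -/
def addAutToMulAut (M : Type*) [AddCommGroup M] : AddAut M →* MulAut (Multiplicative M) where
  toFun e := AddEquiv.toMultiplicative e
  map_one' := rfl
  map_mul' _ _ := rfl

/-- Permutations of `Ω` acting on finitely supported functions `Ω →₀ A`. -/
def finsuppDomAut (A : Type*) [AddCommGroup A] (Ω : Type*) :
    Equiv.Perm Ω →* AddAut (Ω →₀ A) where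
  toFun e := Finsupp.domCongr e
  map_one' := Finsupp.domCongr_refl
  map_mul' e₁ e₂ := (Finsupp.domCongr_trans e₂ e₁).symm

/-- The action of `H` on `⨁_{ω ∈ Ω} A` given by `(h • f)(ω) = f(h⁻¹ • ω)`,
as a homomorphism to the automorphism group of the direct sum. -/
noncomputable def permWreathAction (A : Type*) [AddCommGroup A] (H : Type*) [Group H]
    (Ω : Type*) [MulAction H Ω] : H →* MulAut (Multiplicative (Ω →₀ A)) :=
  (addAutToMulAut (Ω →₀ A)).comp ((finsuppDomAut A Ω).comp (MulAction.toPermHom H Ω))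

/-- The (restricted) permutational wreath product `A ≀_Ω H`:
the semidirect product `(⨁_{ω ∈ Ω} A) ⋊ H` where `H` acts by `(h • f)(ω) = f(h⁻¹ • ω)`. -/
abbrev PermWreath (A : Type*) [AddCommGroup A] (H : Type*) [Group H]
    (Ω : Type*) [MulAction H Ω] : Type _ :=
  SemidirectProduct (Multiplicative (Ω →₀ A)) H (permWreathAction A H Ω)

/-- The (restricted, regular) wreath product `A ≀ H`: the semidirect product
`(⨁_{h ∈ H} A) ⋊ H` where `H` acts by translating indices, `(h • f)(x) = f(h⁻¹x)`. -/
abbrev RestrictedWreath (A : Type*) [AddCommGroup A] (H : Type*) [Group H] : Type _ :=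
  PermWreath A H H

/-!
The alphabet is `A × Bool`: a lamp layer with values in `A` over a marker layer. The element
`(f, t)` of `A ≀ ℤ` moves the marker layer by `t` and adds to the lamp layer the convolution of `f`
with the moved marker layer. This is a cellular automaton commuting with the shift and fixing the
configuration with dark lamps and no markers, and these automata compose like the wreath product.
Starting from a single marker at the origin over dark lamps, the image under `(f, t)` has its only
marker at `-t` and lamp layer `f` translated by `-t`, so the orbit map is injective.
-/

open Multiplicative

section LitSum

variable {A : Type} [AddCommGroup A]

def litSum (f : Multiplicative ℤ →₀ A) (y : ℤ → Bool) : A :=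
  f.sum fun n a => if y (toAdd n) then a else 0

lemma litSum_congr {f : Multiplicative ℤ →₀ A} {y y' : ℤ → Bool}
    (h : ∀ n ∈ f.support, y (toAdd n) = y' (toAdd n)) : litSum f y = litSum f y' :=
  Finsupp.sum_congr fun n hn => by rw [h n hn]

@[simp]
lemma litSum_zero (y : ℤ → Bool) : litSum (0 : Multiplicative ℤ →₀ A) y = 0 :=
  Finsupp.sum_zero_index

lemma litSum_add (f f' : Multiplicative ℤ →₀ A) (y : ℤ → Bool) :
    litSum (f + f') y = litSum f y + litSum f' y :=
  Finsupp.sum_add_index' (fun _ => ite_self 0) fun _ _ _ => by split <;> simp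

@[simp]
lemma litSum_const_false (f : Multiplicative ℤ →₀ A) : litSum f (fun _ => false) = 0 := by
  simp [litSum]

lemma litSum_decide_eq (f : Multiplicative ℤ →₀ A) (m : ℤ) :
    litSum f (fun k => decide (k = m)) = f (ofAdd m) := by
  rw [litSum, Finsupp.sum_eq_single (ofAdd m)]
  · simp
  · intro n _ hn
    simp [show toAdd n ≠ m from fun h => hn (by rw [← h, ofAdd_toAdd])]
  · simp

lemma litSum_permWreathAction (r : Multiplicative ℤ) (f : Multiplicative (Multiplicative ℤ →₀ A))
    (y : ℤ → Bool) :
    litSum (toAdd (permWreathAction A _ (Multiplicative ℤ) r f)) y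
      = litSum (toAdd f) fun k => y (toAdd r + k) :=
  Finsupp.sum_equivMapDomain _ _ _

end LitSum

lemma FullShift.continuous_of_finite_dependence {α β : Type*} (F : FullShift α → FullShift β)
    (hF : ∀ i, ∃ S : Finset ℤ, ∀ x y : FullShift α, (∀ j ∈ S, x j = y j) → F x i = F y i) :
    Continuous F := by
  let : TopologicalSpace α := ⊥
  have : DiscreteTopology α := ⟨rfl⟩
  let : TopologicalSpace β := ⊥
  have : DiscreteTopology β := ⟨rfl⟩
  refine continuous_pi fun i => IsLocallyConstant.continuous ?_
  obtain ⟨S, hS⟩ := hF i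
  refine IsLocallyConstant.iff_exists_open _ |>.mpr fun x => ?_
  refine ⟨(S : Set ℤ).pi fun j => {x j}, isOpen_set_pi S.finite_toSet fun _ _ => isOpen_discrete _,
    Set.mem_pi.mpr fun _ _ => rfl, fun y hy => hS y x fun j hj => hy j hj⟩

section Lamplighter

variable {A : Type} [AddCommGroup A]

def lamplighterMap (g : RestrictedWreath A (Multiplicative ℤ)) (x : FullShift (A × Bool)) :
    FullShift (A × Bool) :=
  fun i => ((x i).1 + litSum (toAdd g.left) (fun k => (x (i - k + toAdd g.right)).2),
    (x (i + toAdd g.right)).2)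

lemma lamplighterMap_one : lamplighterMap (1 : RestrictedWreath A (Multiplicative ℤ)) = id := by
  funext x i
  simp [lamplighterMap]

lemma lamplighterMap_mul (g h : RestrictedWreath A (Multiplicative ℤ))
    (x : FullShift (A × Bool)) :
    lamplighterMap (g * h) x = lamplighterMap g (lamplighterMap h x) := by
  funext i
  have hleft : toAdd (g * h).left
      = toAdd g.left + toAdd (permWreathAction A _ (Multiplicative ℤ) g.right h.left) := rfl
  have hright : toAdd (g * h).right = toAdd g.right + toAdd h.right := rfl
  simp only [lamplighterMap, hleft, hright, litSum_add, litSum_permWreathAction, Prod.mk.injEq]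
  refine ⟨?_, by ring_nf⟩
  rw [add_assoc, add_comm (litSum (toAdd g.left) _)]
  congr 2
  · exact litSum_congr fun n _ => by ring_nf
  · exact litSum_congr fun n _ => by ring_nf

instance : MulAction (RestrictedWreath A (Multiplicative ℤ)) (FullShift (A × Bool)) where
  smul := lamplighterMap
  one_smul x := congrFun lamplighterMap_one x
  mul_smul := lamplighterMap_mul

lemma lamplighter_smul_def (g : RestrictedWreath A (Multiplicative ℤ)) (x : FullShift (A × Bool)) :
    g • x = lamplighterMap g x := rfl

instance : ContinuousConstSMul (RestrictedWreath A (Multiplicative ℤ)) (FullShift (A × Bool)) where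
  continuous_const_smul g := by
    refine FullShift.continuous_of_finite_dependence _ fun i => ?_
    refine ⟨insert i (insert (i + toAdd g.right)
      ((toAdd g.left).support.image fun n => i - toAdd n + toAdd g.right)), fun x y hxy => ?_⟩
    simp only [lamplighter_smul_def, lamplighterMap, Finset.mem_insert, Finset.mem_image] at hxy ⊢
    have hlit : litSum (toAdd g.left) (fun k => (x (i - k + toAdd g.right)).2)
        = litSum (toAdd g.left) (fun k => (y (i - k + toAdd g.right)).2) :=
      litSum_congr fun n hn => by rw [hxy _ (Or.inr (Or.inr ⟨n, hn, rfl⟩))]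
    rw [hxy i (by simp), hxy (i + toAdd g.right) (by simp), hlit]

lemma lamplighterMap_shiftHomeo (g : RestrictedWreath A (Multiplicative ℤ))
    (x : FullShift (A × Bool)) :
    lamplighterMap g (shiftHomeo _ x) = shiftHomeo _ (lamplighterMap g x) := by
  funext i
  change lamplighterMap g (fun j => x (j + 1)) i = lamplighterMap g x (i + 1)
  simp only [lamplighterMap, Prod.mk.injEq]
  refine ⟨?_, by ring_nf⟩
  congr 1
  exact litSum_congr fun n _ => by ring_nf

lemma lamplighterMap_constConfig (g : RestrictedWreath A (Multiplicative ℤ)) :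
    lamplighterMap g (constConfig _ (0, false)) = constConfig _ (0, false) := by
  funext i
  simp [lamplighterMap, constConfig]

noncomputable def lamplighterHom (A : Type) [AddCommGroup A] :
    RestrictedWreath A (Multiplicative ℤ) →* ShiftAut (A × Bool) where
  toFun g := ⟨Homeomorph.smul g, Subgroup.mem_centralizer_singleton_iff.mpr <|
    Homeomorph.ext fun x => lamplighterMap_shiftHomeo g x⟩
  map_one' := Subtype.ext <| Homeomorph.ext <|
    one_smul (RestrictedWreath A (Multiplicative ℤ))
  map_mul' g h := Subtype.ext <| Homeomorph.ext fun x => mul_smul g h x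

def markerAtZero (A : Type) [AddCommGroup A] : FullShift (A × Bool) :=
  fun i => (0, decide (i = 0))

lemma finite_setOf_markerAtZero_ne : {i : ℤ | markerAtZero A i ≠ (0, false)}.Finite :=
  (Set.finite_singleton 0).subset fun i hi => by
    by_contra h
    exact hi (by simp [markerAtZero, show i ≠ 0 from h])

lemma lamplighterMap_markerAtZero (g : RestrictedWreath A (Multiplicative ℤ)) :
    lamplighterMap g (markerAtZero A) = fun i =>
      (toAdd g.left (ofAdd (i + toAdd g.right)), decide (i + toAdd g.right = 0)) := by
  funext i
  have hmarker : (fun k => decide (i - k + toAdd g.right = 0))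
      = fun k => decide (k = i + toAdd g.right) := by
    funext k
    exact decide_eq_decide.mpr (by omega)
  simp only [lamplighterMap, markerAtZero, zero_add, hmarker, litSum_decide_eq]

lemma injective_lamplighterMap_markerAtZero :
    Function.Injective fun g : RestrictedWreath A (Multiplicative ℤ) =>
      lamplighterMap g (markerAtZero A) := by
  intro g g' h
  have hcell (i : ℤ) : lamplighterMap g (markerAtZero A) i = lamplighterMap g' (markerAtZero A) i :=
    congrFun h i
  simp only [lamplighterMap_markerAtZero, Prod.mk.injEq] at hcell
  have hright : toAdd g.right = toAdd g'.right := by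
    have hmarker := (hcell (-toAdd g.right)).2
    simp only [neg_add_cancel, decide_true] at hmarker
    have := of_decide_eq_true hmarker.symm
    omega
  have hleft : toAdd g.left = toAdd g'.left := Finsupp.ext fun n => by
    simpa [hright] using (hcell (toAdd n - toAdd g'.right)).1
  exact SemidirectProduct.ext hleft hright

end Lamplighter

/-- For every finite abelian group `A`, the lamplighter group `A ≀ ℤ`
admits a pointy action. -/
theorem lamplighter_hasPointyAction (A : Type) [AddCommGroup A] [Finite A] :
    HasPointyAction (RestrictedWreath A (Multiplicative ℤ)) := by
  have horbit : Function.Injective fun g : RestrictedWreath A (Multiplicative ℤ) =>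
      (lamplighterHom A g : FullShift (A × Bool) ≃ₜ FullShift (A × Bool)) • markerAtZero A :=
    injective_lamplighterMap_markerAtZero (A := A)
  refine ⟨A × Bool, Fintype.ofFinite _, (0, false), lamplighterHom A,
    Function.Injective.of_comp (f := fun φ : ShiftAut (A × Bool) =>
      (φ : FullShift (A × Bool) ≃ₜ FullShift (A × Bool)) • markerAtZero A) horbit,
    fun g => lamplighterMap_constConfig g, markerAtZero A, finite_setOf_markerAtZero_ne, horbit⟩
end

section
/- Fix k ≥ 1. For every element w of the free group on k generators, the image of w in K_k under the homomorphism sending the i-th generator to g_i is the identity permutation of ℤ^k if and only if there exists N such that for all n ≥ N, the image of w in K_k^n under the homomorphism sending the i-th generator to g_i^{(n)} is the identity permutation of (ℤ/nℤ)^k. (That is, K_k is the limit of the marked groups K_k^n.) -/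
/-!
Reduction modulo `n` intertwines the action of a word `w` on `ℤ^k` with its action on
`(ℤ/nℤ)^k` at every vector whose coordinates stay in `(-n, n)` during the `L` steps of `w`:
each generator moves one coordinate by `1` and only tests coordinates for vanishing, which
reduction detects on `(-n, n)`. Once `n > 2L + 1`, every vector of `(ℤ/nℤ)^k` has such a lift
(by minimal absolute values), so `w = 1` on `ℤ^k` forces `w = 1` on `(ℤ/nℤ)^k`. Conversely, for
a fixed `u ∈ ℤ^k` and large `n`, `w • u ≡ u` modulo `n` while `|w • u - u| ≤ L < n`.
-/

/-- The generator `g_i` acting on `(Fin k → R)`: it adds the `i`-th standard basis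
vector `e_i` to `v` when `v j = 0` for all `j < i`, and fixes `v` otherwise. -/
def kGen (R : Type*) [AddGroup R] [One R] [DecidableEq R] (k : ℕ) (i : Fin k) :
    Equiv.Perm (Fin k → R) where
  toFun v := if ∀ j, j < i → v j = 0 then (fun j => v j + if j = i then 1 else 0) else v
  invFun v := if ∀ j, j < i → v j = 0 then (fun j => v j - if j = i then 1 else 0) else v
  left_inv v := by
    by_cases h : ∀ j, j < i → v j = 0
    · have h' : ∀ j, j < i → v j + (if j = i then 1 else 0) = 0 := fun j hj => by
        rw [if_neg (Fin.ne_of_lt hj), add_zero]; exact h j hj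
      simp only [if_pos h, if_pos h']
      funext j; exact add_sub_cancel_right _ _
    · simp only [if_neg h]
  right_inv v := by
    by_cases h : ∀ j, j < i → v j = 0
    · have h' : ∀ j, j < i → v j - (if j = i then 1 else 0) = 0 := fun j hj => by
        rw [if_neg (Fin.ne_of_lt hj), sub_zero]; exact h j hj
      simp only [if_pos h, if_pos h']
      funext j; exact sub_add_cancel _ _
    · simp only [if_neg h]

/-- `K_k`: the subgroup of `Perm(ℤ^k)` generated by `g_1, …, g_k`. -/
def Kk (k : ℕ) : Subgroup (Equiv.Perm (Fin k → ℤ)) :=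
  Subgroup.closure (Set.range (kGen ℤ k))

/-- `K_k^n`: the subgroup of `Perm((ℤ/nℤ)^k)` generated by `g_1^{(n)}, …, g_k^{(n)}`. -/
def KkMod (k n : ℕ) : Subgroup (Equiv.Perm (Fin k → ZMod n)) :=
  Subgroup.closure (Set.range (kGen (ZMod n) k))

/-- The diagonal generator `ĝ_i = (g_i^{(n)})_{n ≥ 1}` of `K̂_k` (with `n`-th coordinate
indexed as `n + 1` so that all moduli `n + 1 ≥ 1` occur). -/
def ghat (k : ℕ) (i : Fin k) : ∀ n : ℕ, Equiv.Perm (Fin k → ZMod (n + 1)) :=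
  fun n => kGen (ZMod (n + 1)) k i

/-- `K̂_k`: the subgroup of `∏_{n ≥ 1} Perm((ℤ/nℤ)^k)` generated by the diagonal
elements `ĝ_1, …, ĝ_k`. -/
def Khat (k : ℕ) : Subgroup (∀ n : ℕ, Equiv.Perm (Fin k → ZMod (n + 1))) :=
  Subgroup.closure (Set.range (ghat k))


open Equiv Filter

section Transfer

variable {R S : Type*} [AddGroup R] [One R] [DecidableEq R] [AddGroup S] [One S] [DecidableEq S]
  {k : ℕ} (i : Fin k)

theorem kGen_apply (v : Fin k → R) :
    kGen R k i v = if ∀ j, j < i → v j = 0 then v + Pi.single i 1 else v := by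
  change (if _ then _ else _) = _
  congr 1
  ext j
  simp only [Pi.add_apply, Pi.single_apply]

theorem kGen_inv_apply (v : Fin k → R) :
    (kGen R k i)⁻¹ v = if ∀ j, j < i → v j = 0 then v - Pi.single i 1 else v := by
  change (if _ then _ else _) = _
  congr 1
  ext j
  simp only [Pi.sub_apply, Pi.single_apply]

variable (φ : R →+ S) {v : Fin k → R}

theorem comp_kGen_apply (hφ : φ 1 = 1) (hv : ∀ j, φ (v j) = 0 → v j = 0) :
    φ ∘ kGen R k i v = kGen S k i (φ ∘ v) := by
  have hcond : (∀ j, j < i → φ (v j) = 0) ↔ ∀ j, j < i → v j = 0 :=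
    forall₂_congr fun j _ => ⟨hv j, fun h => h ▸ map_zero φ⟩
  simp only [kGen_apply, Function.comp_apply, hcond]
  split_ifs
  · ext j; simp only [Function.comp_apply, Pi.add_apply, map_add, Pi.single_apply, apply_ite φ,
      hφ, map_zero]
  · rfl

theorem comp_kGen_inv_apply (hφ : φ 1 = 1) (hv : ∀ j, φ (v j) = 0 → v j = 0) :
    φ ∘ (kGen R k i)⁻¹ v = (kGen S k i)⁻¹ (φ ∘ v) := by
  have hcond : (∀ j, j < i → φ (v j) = 0) ↔ ∀ j, j < i → v j = 0 :=
    forall₂_congr fun j _ => ⟨hv j, fun h => h ▸ map_zero φ⟩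
  simp only [kGen_inv_apply, Function.comp_apply, hcond]
  split_ifs
  · ext j; simp only [Function.comp_apply, Pi.sub_apply, map_sub, Pi.single_apply, apply_ite φ,
      hφ, map_zero]
  · rfl

end Transfer

section Displacement

variable {k : ℕ} (i : Fin k) (u : Fin k → ℤ) (j : Fin k)

theorem abs_kGen_apply_sub_le_one : |kGen ℤ k i u j - u j| ≤ 1 := by
  rw [kGen_apply]
  split_ifs
  · simp only [Pi.add_apply, add_sub_cancel_left, Pi.single_apply]; split_ifs <;> simp
  · simp

theorem abs_kGen_inv_apply_sub_le_one : |(kGen ℤ k i)⁻¹ u j - u j| ≤ 1 := by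
  rw [kGen_inv_apply]
  split_ifs
  · simp only [Pi.sub_apply, sub_sub_cancel_left, Pi.single_apply]; split_ifs <;> simp
  · simp

end Displacement

theorem ZMod.intCast_eq_zero_iff_of_abs_lt {n : ℕ} {a : ℤ} (ha : |a| < n) :
    (a : ZMod n) = 0 ↔ a = 0 :=
  ⟨fun h => Int.eq_zero_of_abs_lt_dvd ((ZMod.intCast_zmod_eq_zero_iff_dvd a n).1 h) ha,
    fun h => h ▸ Int.cast_zero⟩

/-- `σ` moves every coordinate of `ℤ^k` by at most `L`, and `τ n` is its reduction modulo `n`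
on the vectors that cannot wrap around `ℤ/nℤ` within `L` unit steps. -/
structure ReducesTo {k : ℕ} (L : ℕ) (σ : Perm (Fin k → ℤ)) (τ : ∀ n : ℕ, Perm (Fin k → ZMod n)) :
    Prop where
  abs_apply_sub_le (u : Fin k → ℤ) (j : Fin k) : |σ u j - u j| ≤ L
  cast_apply (n : ℕ) (u : Fin k → ℤ) (hu : ∀ j, |u j| + L < n) :
    Int.cast ∘ σ u = τ n (Int.cast ∘ u)

namespace ReducesTo

variable {k L L' : ℕ} {σ σ' : Perm (Fin k → ℤ)} {τ τ' : ∀ n : ℕ, Perm (Fin k → ZMod n)}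

theorem one : ReducesTo (k := k) 0 1 1 :=
  ⟨fun u j => by simp, fun _ _ _ => rfl⟩

theorem mul (h : ReducesTo L σ τ) (h' : ReducesTo L' σ' τ') :
    ReducesTo (L + L') (σ * σ') (τ * τ') := by
  refine ⟨fun u j => ?_, fun n u hu => ?_⟩
  · have htri := abs_sub_le (σ (σ' u) j) (σ' u j) (u j)
    have hσ := h.abs_apply_sub_le (σ' u) j
    have hσ' := h'.abs_apply_sub_le u j
    simp only [Perm.mul_apply]
    push_cast
    linarith
  · have hσ'u : ∀ j, |σ' u j| + L < n := fun j => by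
      have htri := abs_sub_abs_le_abs_sub (σ' u j) (u j)
      have hσ' := h'.abs_apply_sub_le u j
      have hmargin := hu j
      push_cast at hmargin
      linarith
    simp only [Perm.mul_apply, Pi.mul_apply, h.cast_apply n _ hσ'u,
      h'.cast_apply n u fun j => by have := hu j; push_cast at this; linarith]

theorem eventually_eq_one (h : ReducesTo L σ τ) (hσ : σ = 1) : ∀ᶠ n in atTop, τ n = 1 := by
  filter_upwards [eventually_ge_atTop (2 * L + 2)] with n hn
  have : NeZero n := ⟨by omega⟩
  refine Equiv.ext fun v => ?_
  set u : Fin k → ℤ := fun j => (v j).valMinAbs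
  have hv : Int.cast ∘ u = v := funext fun j => ZMod.coe_valMinAbs (v j)
  have hu : ∀ j, |u j| + L < n := fun j => by
    obtain ⟨h₁, h₂⟩ := (v j).valMinAbs_mem_Ioc
    have : (2 * L + 2 : ℤ) ≤ n := by exact_mod_cast hn
    rcases abs_cases (u j) with ⟨habs, _⟩ | ⟨habs, _⟩ <;> rw [habs] <;> linarith
  calc τ n v = τ n (Int.cast ∘ u) := by rw [hv]
    _ = Int.cast ∘ σ u := (h.cast_apply n u hu).symm
    _ = v := by rw [hσ]; exact hv

theorem eq_one_of_frequently (h : ReducesTo L σ τ) (hτ : ∃ᶠ n in atTop, τ n = 1) : σ = 1 := by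
  refine Equiv.ext fun u => funext fun j => ?_
  obtain ⟨M, hM⟩ := Finite.exists_le fun j => |u j|
  obtain ⟨n, hn, hτn⟩ := frequently_atTop.1 hτ (M.toNat + L + 1)
  have hu : ∀ j, |u j| + L < n := fun j => by have := hM j; have := Int.self_le_toNat M; omega
  have hcast : (σ u j : ZMod n) = u j := by
    simpa [hτn] using congrFun (h.cast_apply n u hu) j
  have hdvd : (n : ℤ) ∣ u j - σ u j := (ZMod.intCast_eq_intCast_iff_dvd_sub _ _ _).1 hcast
  have hdist := h.abs_apply_sub_le u j
  have hn' := hu j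
  exact (sub_eq_zero.1 (Int.eq_zero_of_abs_lt_dvd hdvd (by rw [abs_sub_comm]; omega))).symm

theorem eq_one_iff_eventually (h : ReducesTo L σ τ) : σ = 1 ↔ ∀ᶠ n in atTop, τ n = 1 :=
  ⟨h.eventually_eq_one, fun hτ => h.eq_one_of_frequently hτ.frequently⟩

end ReducesTo

section Generators

variable {k : ℕ} (i : Fin k)

theorem reducesTo_kGen : ReducesTo 1 (kGen ℤ k i) (fun n => kGen (ZMod n) k i) :=
  ⟨abs_kGen_apply_sub_le_one i, fun n _ hu =>
    comp_kGen_apply i (Int.castAddHom (ZMod n)) Int.cast_one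
      fun j => (ZMod.intCast_eq_zero_iff_of_abs_lt (by have := hu j; omega)).1⟩

theorem reducesTo_kGen_inv : ReducesTo 1 (kGen ℤ k i)⁻¹ (fun n => kGen (ZMod n) k i)⁻¹ :=
  ⟨abs_kGen_inv_apply_sub_le_one i, fun n _ hu =>
    comp_kGen_inv_apply i (Int.castAddHom (ZMod n)) Int.cast_one
      fun j => (ZMod.intCast_eq_zero_iff_of_abs_lt (by have := hu j; omega)).1⟩

theorem exists_reducesTo_lift_kGen (w : FreeGroup (Fin k)) :
    ∃ L, ReducesTo L (FreeGroup.lift (kGen ℤ k) w)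
      (fun n => FreeGroup.lift (kGen (ZMod n) k) w) := by
  induction w using FreeGroup.induction_on with
  | C1 => exact ⟨0, by simp only [map_one]; exact ReducesTo.one⟩
  | of i => exact ⟨1, by simp only [FreeGroup.lift_apply_of]; exact reducesTo_kGen i⟩
  | inv_of i _ =>
    exact ⟨1, by simp only [map_inv, FreeGroup.lift_apply_of]; exact reducesTo_kGen_inv i⟩
  | mul x y hx hy =>
    obtain ⟨Lx, hx⟩ := hx
    obtain ⟨Ly, hy⟩ := hy
    exact ⟨Lx + Ly, by simp only [map_mul]; exact hx.mul hy⟩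

end Generators

theorem Kk_limit_of_marked_groups_general (k : ℕ) (w : FreeGroup (Fin k)) :
    FreeGroup.lift (kGen ℤ k) w = 1 ↔
      ∃ N : ℕ, ∀ n : ℕ, N ≤ n → FreeGroup.lift (kGen (ZMod (n + 1)) k) w = 1 := by
  obtain ⟨L, hL⟩ := exists_reducesTo_lift_kGen w
  rw [hL.eq_one_iff_eventually, ← map_add_atTop_eq_nat 1, eventually_map, eventually_atTop]

/-- `K_k` is the limit of the marked groups `K_k^n`: a word `w` in the
free group on `k` generators is trivial in `K_k` iff it is trivial in `K_k^n` for all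
sufficiently large `n`. -/
theorem Kk_limit_of_marked_groups (k : ℕ) (hk : 1 ≤ k) (w : FreeGroup (Fin k)) :
    FreeGroup.lift (kGen ℤ k) w = 1 ↔
      ∃ N : ℕ, ∀ n : ℕ, N ≤ n → FreeGroup.lift (kGen (ZMod (n + 1)) k) w = 1 :=
  Kk_limit_of_marked_groups_general k w
end

section
/- For every k ≥ 1, the group K_k is torsion-free: every element of K_k other than the identity has infinite order. -/
/-!
Each generator `g_i` changes only the `i`-th coordinate, by an amount that depends only on the
coordinates before `i`. Permutations of `ι → G` with this triangular property form a group, and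
a nontrivial one `f` has a first coordinate `l` that it moves. Since `f` fixes all earlier
coordinates, its displacement `c ≠ 0` in coordinate `l` is the same along the whole orbit of `v`,
so `(f ^ n) v l = v l + n • c`, which never returns to `v l` in a torsion-free group.
-/

open Equiv

variable {ι G : Type*} [LinearOrder ι]

theorem Equiv.Perm.exists_first_moved_coord [WellFoundedLT ι] {f : Perm (ι → G)}
    (h1 : f ≠ 1) :
    ∃ v l, f v l ≠ v l ∧ ∀ t < l, ∀ w, f w t = w t := by
  have hmoved : {l : ι | ∃ v, f v l ≠ v l}.Nonempty := by
    by_contra! hnone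
    exact h1 <| Perm.ext fun v => funext fun l =>
      not_exists_not.mp (Set.eq_empty_iff_forall_notMem.mp hnone l) v
  obtain ⟨l, ⟨v, hv⟩, hmin⟩ := WellFounded.has_min wellFounded_lt _ hmoved
  exact ⟨v, l, hv, fun t ht w => by_contra fun hw => hmin t ⟨w, hw⟩ ht⟩

variable [AddCommGroup G]

def IsTriangular (f : Perm (ι → G)) : Prop :=
  ∀ ⦃v w : ι → G⦄ ⦃l : ι⦄, (∀ t < l, v t = w t) → f v l - v l = f w l - w l

namespace IsTriangular

variable {f g : Perm (ι → G)}

theorem eqOn_lt (hf : IsTriangular f) {v w : ι → G} {l : ι} (hvw : ∀ t < l, v t = w t) :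
    ∀ t < l, f v t = f w t := fun t ht => by
  have hdisp := hf fun s hs => hvw s (hs.trans ht)
  rw [hvw t ht] at hdisp
  exact sub_left_injective hdisp

theorem mul (hf : IsTriangular f) (hg : IsTriangular g) : IsTriangular (f * g) := by
  intro v w l hvw
  have hgl := hg hvw
  have hfl := hf (hg.eqOn_lt hvw)
  simp only [Perm.mul_apply]
  rw [← sub_add_sub_cancel _ (g v l), ← sub_add_sub_cancel (f (g w) l) (g w l), hfl, hgl]

theorem inv_eqOn_lt [WellFoundedLT ι] (hf : IsTriangular f) {v w : ι → G} {l : ι}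
    (hvw : ∀ t < l, v t = w t) : ∀ t < l, f⁻¹ v t = f⁻¹ w t := by
  intro t
  induction t using WellFoundedLT.induction with
  | _ t ih =>
    intro ht
    have hdisp := hf (v := f⁻¹ v) (w := f⁻¹ w) fun s hs => ih s hs (hs.trans ht)
    simp only [Perm.coe_inv, Equiv.apply_symm_apply, hvw t ht] at hdisp
    exact sub_right_injective hdisp

theorem inv [WellFoundedLT ι] (hf : IsTriangular f) : IsTriangular f⁻¹ := by
  intro v w l hvw
  have hdisp := hf (hf.inv_eqOn_lt hvw)
  simp only [Perm.coe_inv, Equiv.apply_symm_apply] at hdisp ⊢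
  rw [← neg_sub, hdisp, neg_sub]

end IsTriangular

variable (ι G) in
def triangularSubgroup [WellFoundedLT ι] : Subgroup (Perm (ι → G)) where
  carrier := {f | IsTriangular f}
  one_mem' := fun _ _ _ _ => by simp
  mul_mem' := IsTriangular.mul
  inv_mem' := IsTriangular.inv

@[simp]
theorem mem_triangularSubgroup [WellFoundedLT ι] {f : Perm (ι → G)} :
    f ∈ triangularSubgroup ι G ↔ IsTriangular f :=
  Iff.rfl

theorem kGen_apply_sub [One G] [DecidableEq G] {k : ℕ} (i l : Fin k) (v : Fin k → G) :
    kGen G k i v l - v l = if (∀ j < i, v j = 0) ∧ l = i then 1 else 0 := by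
  change (kGen G k i).toFun v l - v l = _
  simp only [kGen]
  split_ifs <;> simp_all

theorem isTriangular_kGen [One G] [DecidableEq G] (k : ℕ) (i : Fin k) :
    IsTriangular (kGen G k i) := by
  intro v w l hvw
  simp only [kGen_apply_sub]
  by_cases hl : l = i
  · subst hl
    have hiff : (∀ j < l, v j = 0) ↔ (∀ j < l, w j = 0) :=
      forall₂_congr fun j hj => by rw [hvw j hj]
    simp only [hiff]
  · simp [hl]

theorem Kk_le_triangularSubgroup (k : ℕ) : Kk k ≤ triangularSubgroup (Fin k) ℤ :=
  (Subgroup.closure_le _).mpr <| Set.range_subset_iff.mpr fun i =>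
    mem_triangularSubgroup.mpr (isTriangular_kGen k i)

namespace IsTriangular

variable {f : Perm (ι → G)}

theorem pow_apply_of_fixes_lt (hf : IsTriangular f) {l : ι} (hfix : ∀ t < l, ∀ w, f w t = w t)
    (v : ι → G) (n : ℕ) : (f ^ n) v l = v l + n • (f v l - v l) := by
  have hpow_fix (m : ℕ) : ∀ t < l, (f ^ m) v t = v t := fun t ht => by
    induction m with
    | zero => rfl
    | succ n ih => rw [pow_succ', Perm.mul_apply, hfix t ht, ih]
  induction n with
  | zero => simp
  | succ n ih =>
    have hdisp := hf (v := (f ^ n) v) (w := v) (hpow_fix n)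
    rw [pow_succ', Perm.mul_apply, succ_nsmul, ← add_assoc, ← ih, ← hdisp, add_sub_cancel]

theorem not_isOfFinOrder [WellFoundedLT ι] [IsAddTorsionFree G] (hf : IsTriangular f)
    (h1 : f ≠ 1) : ¬IsOfFinOrder f := by
  obtain ⟨v, l, hv, hfix⟩ := Perm.exists_first_moved_coord h1
  intro hfin
  obtain ⟨n, hn, hpow⟩ := isOfFinOrder_iff_pow_eq_one.mp hfin
  have hcycle := hf.pow_apply_of_fixes_lt hfix v n
  rw [hpow, Perm.one_apply, left_eq_add, smul_eq_zero, sub_eq_zero] at hcycle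
  exact hcycle.elim hn.ne' hv

end IsTriangular

theorem Kk_torsionFree_general (k : ℕ) :
    ∀ x : Kk k, x ≠ 1 → ¬ IsOfFinOrder x := by
  intro x hx hfin
  have hx_tri : IsTriangular (x : Perm (Fin k → ℤ)) :=
    mem_triangularSubgroup.mp (Kk_le_triangularSubgroup k x.2)
  exact hx_tri.not_isOfFinOrder (by simpa using hx) (Submonoid.isOfFinOrder_coe.mpr hfin)

/-- For every `k ≥ 1`, the group `K_k` is torsion-free: every
non-identity element has infinite order. -/
theorem Kk_torsionFree (k : ℕ) (hk : 1 ≤ k) :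
    ∀ x : Kk k, x ≠ 1 → ¬ IsOfFinOrder x :=
  Kk_torsionFree_general k
end

section
/- The group K̂_3 is not torsion-free: there exists an element x ∈ K̂_3 with x ≠ 1 and x of finite order (i.e. x^m = 1 for some m ≥ 1). -/
section
variable {R : Type*} [AddGroup R] [One R] [DecidableEq R]

lemma kGen3_zero_apply (v : Fin 3 → R) :
    kGen R 3 0 v = fun j => v j + if j = 0 then 1 else 0 := by
  simp only [kGen, Equiv.coe_fn_mk]
  rw [if_pos]
  intro j hj
  exact absurd hj (Fin.not_lt_zero j)

lemma kGen3_zero_inv_apply (v : Fin 3 → R) :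
    (kGen R 3 0)⁻¹ v = fun j => v j - if j = 0 then 1 else 0 := by
  simp only [kGen, Equiv.Perm.inv_def, Equiv.coe_fn_symm_mk]
  rw [if_pos]
  intro j hj
  exact absurd hj (Fin.not_lt_zero j)

lemma kGen3_one_apply (v : Fin 3 → R) :
    kGen R 3 1 v = if v 0 = 0 then (fun j => v j + if j = 1 then 1 else 0) else v := by
  simp only [kGen, Equiv.coe_fn_mk]
  refine if_congr ⟨fun h => h 0 (by decide), fun h j hj => ?_⟩ rfl rfl
  have hj0 : j = 0 := by
    have := hj
    fin_cases j <;> simp_all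
  rw [hj0]; exact h

lemma kGen3_one_inv_apply (v : Fin 3 → R) :
    (kGen R 3 1)⁻¹ v = if v 0 = 0 then (fun j => v j - if j = 1 then 1 else 0) else v := by
  simp only [kGen, Equiv.Perm.inv_def, Equiv.coe_fn_symm_mk]
  refine if_congr ⟨fun h => h 0 (by decide), fun h j hj => ?_⟩ rfl rfl
  have hj0 : j = 0 := by
    have := hj
    fin_cases j <;> simp_all
  rw [hj0]; exact h

lemma kGen3_two_apply (v : Fin 3 → R) :
    kGen R 3 2 v = if v 0 = 0 ∧ v 1 = 0 then (fun j => v j + if j = 2 then 1 else 0) else v := by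
  simp only [kGen, Equiv.coe_fn_mk]
  refine if_congr ⟨fun h => ⟨h 0 (by decide), h 1 (by decide)⟩, fun h j hj => ?_⟩ rfl rfl
  fin_cases j
  · exact h.1
  · exact h.2
  · exact absurd hj (by decide)


section
variable {R : Type*} [AddGroup R] [One R] [DecidableEq R]

lemma sApply (v : Fin 3 → R) :
    (kGen R 3 0 ^ 2 * kGen R 3 2 * (kGen R 3 0)⁻¹ ^ 2) v
      = if v 0 = 1 + 1 ∧ v 1 = 0 then (fun j => v j + if j = 2 then 1 else 0) else v := by
  rw [pow_two, pow_two]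
  simp only [Equiv.Perm.mul_apply, kGen3_zero_inv_apply, kGen3_zero_apply, kGen3_two_apply]
  by_cases hv : v 0 = 1 + 1 ∧ v 1 = 0
  · rw [if_pos hv, if_pos]
    · funext j
      by_cases hj : j = 2 <;> by_cases hj0 : j = 0 <;>
        simp_all [sub_add_cancel, sub_zero, add_zero]
    · constructor
      · simp only [if_true]
        rw [hv.1, add_sub_cancel_right, sub_self]
      · have h10 : (1 : Fin 3) ≠ 0 := by decide
        simp [h10, hv.2]
  · rw [if_neg hv, if_neg]
    · funext j
      by_cases hj0 : j = 0 <;> simp_all [sub_add_cancel]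
    · intro hc
      apply hv
      obtain ⟨hc0, hc1⟩ := hc
      simp only [if_true] at hc0
      have h10 : (1 : Fin 3) ≠ 0 := by decide
      simp only [if_neg h10, sub_zero] at hc1
      rw [sub_eq_zero, sub_eq_iff_eq_add] at hc0
      exact ⟨hc0, hc1⟩

lemma key_comm (h2 : (1 + 1 : R) ≠ 0) :
    kGen R 3 1 * (kGen R 3 0 ^ 2 * kGen R 3 2 * (kGen R 3 0)⁻¹ ^ 2)
      = kGen R 3 0 ^ 2 * kGen R 3 2 * (kGen R 3 0)⁻¹ ^ 2 * kGen R 3 1 := by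
  apply Equiv.ext
  intro v
  have e1 : (kGen R 3 1 * (kGen R 3 0 ^ 2 * kGen R 3 2 * (kGen R 3 0)⁻¹ ^ 2)) v
      = kGen R 3 1 ((kGen R 3 0 ^ 2 * kGen R 3 2 * (kGen R 3 0)⁻¹ ^ 2) v) := rfl
  have e2 : (kGen R 3 0 ^ 2 * kGen R 3 2 * (kGen R 3 0)⁻¹ ^ 2 * kGen R 3 1) v
      = (kGen R 3 0 ^ 2 * kGen R 3 2 * (kGen R 3 0)⁻¹ ^ 2) (kGen R 3 1 v) := rfl
  rw [e1, e2, sApply, kGen3_one_apply, sApply, kGen3_one_apply]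
  have d1 : ((0:Fin 3) = 1) = False := by decide
  have d2 : ((0:Fin 3) = 2) = False := by decide
  have d3 : ((1:Fin 3) = 2) = False := by decide
  have d4 : ((1:Fin 3) = 0) = False := by decide
  have h2' : ((0:R) = 1 + 1) = False := by
    simp only [eq_iff_iff, iff_false]
    exact fun h => h2 h.symm
  have h2'' : ((1 + 1 : R) = 0) = False := by
    simp only [eq_iff_iff, iff_false]
    exact h2
  by_cases h0 : v 0 = 0 <;> by_cases hc : v 0 = 1 + 1 ∧ v 1 = 0
  · exact absurd (hc.1.symm.trans h0) h2
  · simp [h0, hc, d1, d2, d3, d4, h2', h2'']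
  · simp [h0, hc.1, hc.2, d1, d2, d3, d4, h2', h2'']
  · simp [h0, hc, d1, d2, d3, d4, h2', h2'']

end

/-- The auxiliary element `ŝ = ĝ₁² ĝ₃ ĝ₁⁻²`. -/
def sHat3 : ∀ n : ℕ, Equiv.Perm (Fin 3 → ZMod (n + 1)) :=
  ghat 3 0 ^ 2 * ghat 3 2 * (ghat 3 0)⁻¹ ^ 2

/-- The torsion element `ŵ = [ĝ₂, ŝ]`. -/
def wHat3 : ∀ n : ℕ, Equiv.Perm (Fin 3 → ZMod (n + 1)) :=
  ghat 3 1 * sHat3 * (ghat 3 1)⁻¹ * sHat3⁻¹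

lemma wHat3_mem : wHat3 ∈ Khat 3 := by
  have h0 : ghat 3 0 ∈ Khat 3 := Subgroup.subset_closure ⟨0, rfl⟩
  have h1 : ghat 3 1 ∈ Khat 3 := Subgroup.subset_closure ⟨1, rfl⟩
  have h2 : ghat 3 2 ∈ Khat 3 := Subgroup.subset_closure ⟨2, rfl⟩
  have hs : sHat3 ∈ Khat 3 :=
    mul_mem (mul_mem (pow_mem h0 2) h2) (pow_mem (inv_mem h0) 2)
  exact mul_mem (mul_mem (mul_mem h1 hs) (inv_mem h1)) (inv_mem hs)

lemma wHat3_one_ne_one : wHat3 1 ≠ 1 := by decide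

lemma wHat3_comp_eq_one (m : ℕ) : wHat3 (m + 2) = 1 := by
  have h2 : (1 + 1 : ZMod (m + 3)) ≠ 0 := by
    rw [one_add_one_eq_two, show (2 : ZMod (m + 3)) = ((2 : ℕ) : ZMod (m + 3)) by push_cast; rfl,
      Ne, ZMod.natCast_eq_zero_iff]
    intro h
    exact absurd (Nat.le_of_dvd (by norm_num) h) (by omega)
  have hw : wHat3 (m + 2)
      = kGen (ZMod (m + 3)) 3 1
      * (kGen (ZMod (m + 3)) 3 0 ^ 2 * kGen (ZMod (m + 3)) 3 2 * (kGen (ZMod (m + 3)) 3 0)⁻¹ ^ 2)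
      * (kGen (ZMod (m + 3)) 3 1)⁻¹
      * (kGen (ZMod (m + 3)) 3 0 ^ 2 * kGen (ZMod (m + 3)) 3 2 * (kGen (ZMod (m + 3)) 3 0)⁻¹ ^ 2)⁻¹ := by
    simp only [wHat3, sHat3, ghat, Pi.mul_apply, Pi.inv_apply, Pi.pow_apply]
  rw [hw, mul_inv_eq_one, key_comm h2, mul_inv_cancel_right]

set_option maxRecDepth 10000 in
lemma wHat3_sq : wHat3 ^ 2 = 1 := by
  funext n
  rw [Pi.pow_apply, Pi.one_apply]
  obtain _ | _ | m := n
  · haveI : Subsingleton (ZMod (0 + 1)) := ⟨by decide⟩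
    exact Equiv.ext fun v => funext fun j => Subsingleton.elim _ _
  · rw [pow_two]
    decide
  · rw [wHat3_comp_eq_one m, one_pow]

/-- The group `K̂_3` is not torsion-free: it contains a nontrivial
element of finite order. -/
theorem Khat_three_not_torsionFree :
    ∃ x : Khat 3, x ≠ 1 ∧ ∃ m : ℕ, 1 ≤ m ∧ x ^ m = 1 := by
  refine ⟨⟨wHat3, wHat3_mem⟩, ?_, 2, one_le_two, ?_⟩
  · intro h
    have h' : wHat3 = 1 := Subtype.ext_iff.mp h
    exact wHat3_one_ne_one (by rw [h']; rfl)
  · refine Subtype.ext ?_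
    rw [SubgroupClass.coe_pow]
    exact wHat3_sq
end
end

section
/- For every k ≥ 1, both K_k and K̂_k are solvable of derived length at most k: the k-th term of the derived series of K_k is trivial, and the k-th term of the derived series of K̂_k is trivial. -/
/-!
Every generator `g_i` is a *shear*: it moves each coordinate `j` by an amount that depends only
on the coordinates below `j`. Shears form a group. On the shears that fix the coordinates below
`m`, the displacement of coordinate `m` depends only on those fixed coordinates, so displacements
add under composition: it is a homomorphism to an abelian group, and commutators of such shears
also fix coordinate `m`. Hence the `m`-th derived subgroup fixes the first `m` coordinates, and
the `k`-th is trivial. For `K̂_k` the same holds in every factor of the product.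
-/

open Equiv
open scoped commutatorElement

theorem derivedSeries_eq_bot_of_le_chain {G : Type*} [Group G] {H : ℕ → Subgroup G}
    (hH : ∀ m, ⁅H m, H m⁆ ≤ H (m + 1)) {K : Subgroup G} (hK : K ≤ H 0) {n : ℕ}
    (hn : H n = ⊥) : derivedSeries K n = ⊥ := by
  have hmap : ∀ m, (derivedSeries K m).map K.subtype ≤ H m := by
    intro m
    induction m with
    | zero => simpa [← MonoidHom.range_eq_map] using hK
    | succ m ih =>
      rw [derivedSeries_succ, Subgroup.map_commutator]
      exact (Subgroup.commutator_mono ih ih).trans (hH m)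
  exact (Subgroup.map_eq_bot_iff_of_injective _ K.subtype_injective).mp
    (le_bot_iff.mp (hn ▸ hmap n))

section Shear

variable {R : Type*} [AddCommGroup R] {k : ℕ}

def IsShear (σ : Perm (Fin k → R)) : Prop :=
  ∀ v w i, (∀ j < i, v j = w j) → σ v i - v i = σ w i - w i

namespace IsShear

variable {σ τ : Perm (Fin k → R)} {v w : Fin k → R} {i : Fin k}

theorem apply_eq_apply (hσ : IsShear σ) (h : ∀ j < i, v j = w j) :
    ∀ j < i, σ v j = σ w j := by
  intro j hj
  have := hσ v w j fun l hl => h l (hl.trans hj)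
  rwa [h j hj, sub_left_inj] at this

theorem eq_of_apply_eq (hσ : IsShear σ) (h : ∀ j < i, σ v j = σ w j) :
    ∀ j < i, v j = w j := by
  intro j
  induction j using WellFoundedLT.induction with
  | _ j ih =>
    intro hj
    have := hσ v w j fun l hl => ih l hl (hl.trans hj)
    rwa [h j hj, sub_right_inj] at this

theorem mul (hσ : IsShear σ) (hτ : IsShear τ) : IsShear (σ * τ) := by
  intro v w i h
  calc σ (τ v) i - v i = (σ (τ v) i - τ v i) + (τ v i - v i) := by abel
    _ = (σ (τ w) i - τ w i) + (τ w i - w i) := by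
      rw [hσ _ _ i (hτ.apply_eq_apply h), hτ v w i h]
    _ = σ (τ w) i - w i := by abel

theorem inv (hσ : IsShear σ) : IsShear σ⁻¹ := by
  intro v w i h
  have h' := hσ (σ⁻¹ v) (σ⁻¹ w) i
    (hσ.eq_of_apply_eq (by simpa only [Perm.coe_inv, Equiv.apply_symm_apply] using h))
  simp only [Perm.coe_inv, Equiv.apply_symm_apply] at h' ⊢
  rw [← neg_sub (v i), ← neg_sub (w i), h']

end IsShear

variable (R k) in
def shearSubgroup (m : ℕ) : Subgroup (Perm (Fin k → R)) where
  carrier := {σ | IsShear σ ∧ ∀ v (i : Fin k), (i : ℕ) < m → σ v i = v i}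
  one_mem' := ⟨fun _ _ _ _ => by simp, fun _ _ _ => rfl⟩
  mul_mem' := fun ⟨hσ, hσm⟩ ⟨hτ, hτm⟩ =>
    ⟨hσ.mul hτ, fun v i hi => (hσm _ i hi).trans (hτm v i hi)⟩
  inv_mem' := fun {σ} ⟨hσ, hσm⟩ =>
    ⟨hσ.inv, fun v i hi => by
      simpa only [Perm.coe_inv, Equiv.apply_symm_apply] using (hσm (σ⁻¹ v) i hi).symm⟩

theorem mem_shearSubgroup {m : ℕ} {σ : Perm (Fin k → R)} :
    σ ∈ shearSubgroup R k m ↔ IsShear σ ∧ ∀ v (i : Fin k), (i : ℕ) < m → σ v i = v i :=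
  Iff.rfl

theorem shearSubgroup_self : shearSubgroup R k k = ⊥ :=
  (Subgroup.eq_bot_iff_forall _).mpr fun _ hσ =>
    Perm.ext fun v => funext fun i => (mem_shearSubgroup.mp hσ).2 v i i.isLt

def shearSubgroup.displacement (i : Fin k) :
    shearSubgroup R k i →* Multiplicative ((Fin k → R) → R) where
  toFun σ := .ofAdd fun v => σ.1 v i - v i
  map_one' := ofAdd_eq_one.mpr <| funext fun _ => sub_self _
  map_mul' σ τ := by
    rw [← ofAdd_add]
    congr 1
    funext v
    have hσ := (mem_shearSubgroup.mp σ.2).1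
    have hτ := (mem_shearSubgroup.mp τ.2).2
    calc (σ * τ).1 v i - v i = (σ.1 (τ.1 v) i - τ.1 v i) + (τ.1 v i - v i) := by
          simp only [Subgroup.coe_mul, Perm.mul_apply]; abel
      _ = (σ.1 v i - v i) + (τ.1 v i - v i) := by
          rw [hσ (τ.1 v) v i fun j hj => hτ v j hj]

theorem commutator_shearSubgroup_le (m : ℕ) :
    ⁅shearSubgroup R k m, shearSubgroup R k m⁆ ≤ shearSubgroup R k (m + 1) := by
  rw [Subgroup.commutator_le]
  intro x hx y hy
  have hxy := mem_shearSubgroup.mp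
    ((shearSubgroup R k m).commutator_le_self (Subgroup.commutator_mem_commutator hx hy))
  refine ⟨hxy.1, fun v i hi => ?_⟩
  obtain hi | rfl := Nat.lt_succ_iff_lt_or_eq.mp hi
  · exact hxy.2 v i hi
  have h1 : shearSubgroup.displacement i ⁅(⟨x, hx⟩ : shearSubgroup R k i), ⟨y, hy⟩⁆ = 1 := by
    rw [map_commutatorElement, commutatorElement_eq_one_iff_commute]
    exact Commute.all _ _
  exact sub_eq_zero.mp (congrFun (congrArg Multiplicative.toAdd h1) v)

end Shear

section Generators

variable {R : Type*} [AddCommGroup R] [One R] [DecidableEq R] {k : ℕ}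

theorem kGen_apply_sub_self (i₀ i : Fin k) (v : Fin k → R) :
    kGen R k i₀ v i - v i = if (∀ j < i₀, v j = 0) ∧ i = i₀ then 1 else 0 := by
  simp only [kGen, coe_fn_mk]
  split_ifs <;> simp_all

theorem kGen_mem_shearSubgroup_zero (i₀ : Fin k) : kGen R k i₀ ∈ shearSubgroup R k 0 := by
  refine ⟨fun v w i h => ?_, fun _ _ hi => absurd hi (Nat.not_lt_zero _)⟩
  rw [kGen_apply_sub_self, kGen_apply_sub_self]
  rcases eq_or_ne i i₀ with rfl | hi
  · have : (∀ j < i, v j = 0) ↔ ∀ j < i, w j = 0 := forall₂_congr fun j hj => by rw [h j hj]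
    simp only [this, and_true]
  · simp only [hi, and_false]

end Generators

theorem Kk_le_shearSubgroup (k : ℕ) : Kk k ≤ shearSubgroup ℤ k 0 :=
  (Subgroup.closure_le _).mpr <| Set.range_subset_iff.mpr kGen_mem_shearSubgroup_zero

theorem Khat_le_pi_shearSubgroup (k : ℕ) :
    Khat k ≤ Subgroup.pi Set.univ fun n => shearSubgroup (ZMod (n + 1)) k 0 :=
  (Subgroup.closure_le _).mpr <| Set.range_subset_iff.mpr fun i _ _ => kGen_mem_shearSubgroup_zero i

theorem Kk_Khat_solvable_general (k : ℕ) :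
    derivedSeries (Kk k) k = ⊥ ∧ derivedSeries (Khat k) k = ⊥ := by
  let H (m : ℕ) := Subgroup.pi Set.univ fun n => shearSubgroup (ZMod (n + 1)) k m
  have hH (m : ℕ) : ⁅H m, H m⁆ ≤ H (m + 1) := (Subgroup.commutator_pi_pi_le _ _).trans
    fun _ hx n hn => commutator_shearSubgroup_le m (hx n hn)
  have hHk : H k = ⊥ := by simp only [H, shearSubgroup_self, Subgroup.pi_bot]
  exact ⟨derivedSeries_eq_bot_of_le_chain commutator_shearSubgroup_le (Kk_le_shearSubgroup k)
      shearSubgroup_self,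
    derivedSeries_eq_bot_of_le_chain hH (Khat_le_pi_shearSubgroup k) hHk⟩

/-- For every `k ≥ 1`, both `K_k` and `K̂_k` are solvable of derived
length at most `k`. -/
theorem Kk_Khat_solvable (k : ℕ) (hk : 1 ≤ k) :
    derivedSeries (Kk k) k = ⊥ ∧ derivedSeries (Khat k) k = ⊥ :=
  Kk_Khat_solvable_general k
end
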